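/- arXiv:1901.10012 — 2 statements merged into one kernel-verified Lean document; each statement's English description precedes it below -/
import Mathlib

section
/- Let X be a real random variable with law μ_X ≪ L₁ and density ρ_X, let φ ∈ C¹(ℝ), and let Y = φ(X). Assume that Y has law μ_Y ≪ L₁ with density ρ_Y. Let γ = {(x, φ(x)) : x ∈ ℝ} and define ν₁(A) = ∫_{γ∩A} ρ_X(x)ρ_Y(y) dσ(x,y) (line integral with respect to arclength). Then the joint law μ of (X,Y) satisfies μ ≪ ν₁ and the function L(x, φ(x)) = 1/(ρ_Y(φ(x)) √(1 + φ'(x)²)) is a version of dμ/dν₁, i.e., ∫_A L dν₁ = μ(γ ∩ A) = μ(A) for all Borel A ⊆ ℝ². -/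
open MeasureTheory Set Filter Topology
open scoped ENNReal

/-!
Pushing a measure forward commutes with taking densities, so `ν₁.withDensity L` is the image
under `x ↦ (x, φ x)` of Lebesgue measure with density `ρX(x) ρY(φ x) √(1+φ'(x)²) · L(x, φ x)`.
This density equals `ρX(x)` wherever `ρY(φ x) > 0`, and that holds for `μ_X`-almost every `x`
because `Y = φ(X)` has density `ρY`. Hence `ν₁.withDensity L` is the image of `μ_X` under the
graph map, which is the joint law `μ`; both claims are restatements of `ν₁.withDensity L = μ`.
-/

theorem withDensity_map_eq_map_withDensity_comp {α β : Type*} [MeasurableSpace α]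
    [MeasurableSpace β] {μ : Measure α} {f : α → β} (hf : Measurable f) {g : β → ℝ≥0∞}
    (hg : Measurable g) :
    (μ.map f).withDensity g = (μ.withDensity (g ∘ f)).map f := by
  ext s hs
  rw [withDensity_apply _ hs, Measure.map_apply hf hs, withDensity_apply _ (hf hs),
    setLIntegral_map hs hg hf, Function.comp_def]

theorem ae_pos_of_map_eq_withDensity_ofReal {Ω α : Type*} [MeasurableSpace Ω]
    [MeasurableSpace α] {ℙ : Measure Ω} {μ : Measure α} {Y : Ω → α} (hY : AEMeasurable Y ℙ)
    {ρ : α → ℝ} (hρ : Measurable ρ) (h : ℙ.map Y = μ.withDensity fun y => ENNReal.ofReal (ρ y)) :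
    ∀ᵐ ω ∂ℙ, 0 < ρ (Y ω) :=
  ae_of_ae_map hY <| h ▸ (ae_withDensity_iff hρ.ennreal_ofReal).2
    (ae_of_all _ fun _ hy => ENNReal.ofReal_pos.1 (pos_iff_ne_zero.2 hy))

theorem ENNReal.ofReal_mul_mul_mul_ofReal_one_div_mul_cancel {a b c : ℝ} (hc : 0 < c)
    (h : ENNReal.ofReal a ≠ 0 → 0 < b) :
    ENNReal.ofReal (a * b * c) * ENNReal.ofReal (1 / (b * c)) = ENNReal.ofReal a := by
  by_cases hb : 0 < b
  · rw [← ENNReal.ofReal_mul' (by positivity)]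
    congr 1
    field_simp
  · have hbc : 1 / (b * c) ≤ 0 := one_div_nonpos.2 (by nlinarith)
    rw [not_not.1 (mt h hb), ENNReal.ofReal_of_nonpos hbc, mul_zero]

theorem stmt_10_general
    {Ω : Type*} [MeasurableSpace Ω] (ℙ : Measure Ω)
    (X : Ω → ℝ) (hX : Measurable X)
    (φ : ℝ → ℝ) (hφ : ContDiff ℝ 1 φ)
    (ρX ρY : ℝ → ℝ) (hρXm : Measurable ρX) (hρYm : Measurable ρY)
    (hρX : ℙ.map X = volume.withDensity (fun x => ENNReal.ofReal (ρX x)))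
    (hρY : ℙ.map (fun ω => φ (X ω)) = volume.withDensity (fun y => ENNReal.ofReal (ρY y)))
    (μ : Measure (ℝ × ℝ))
    (hμ : μ = ℙ.map (fun ω => (X ω, φ (X ω))))
    (ν₁ : Measure (ℝ × ℝ))
    (hν₁ : ν₁ = (volume.withDensity
        (fun x => ENNReal.ofReal (ρX x * ρY (φ x) * Real.sqrt (1 + deriv φ x ^ 2)))).map
        (fun x => (x, φ x))) :
    μ ≪ ν₁ ∧
      ∀ A : Set (ℝ × ℝ), MeasurableSet A →
        ∫⁻ p in A,
            ENNReal.ofReal (1 / (ρY p.2 * Real.sqrt (1 + deriv φ p.1 ^ 2))) ∂ν₁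
          = μ A := by
  have hφm : Measurable φ := hφ.continuous.measurable
  have hgraph : Measurable fun x : ℝ => (x, φ x) := measurable_id.prodMk hφm
  set L : ℝ × ℝ → ℝ≥0∞ := fun p =>
    ENNReal.ofReal (1 / (ρY p.2 * Real.sqrt (1 + deriv φ p.1 ^ 2)))
  have hL : Measurable L := by fun_prop
  have hρY_pos : ∀ᵐ x ∂volume, ENNReal.ofReal (ρX x) ≠ 0 → 0 < ρY (φ x) := by
    have h : ∀ᵐ x ∂ℙ.map X, 0 < ρY (φ x) :=
      (ae_map_iff hX.aemeasurable (measurableSet_lt measurable_const (hρYm.comp hφm))).2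
        (ae_pos_of_map_eq_withDensity_ofReal (hφm.comp hX).aemeasurable hρYm hρY)
    rwa [hρX, ae_withDensity_iff hρXm.ennreal_ofReal] at h
  have hμ_graph : μ = (ℙ.map X).map fun x => (x, φ x) := by
    rw [hμ, Measure.map_map hgraph hX]
    rfl
  have hdensity : ν₁.withDensity L = μ := by
    rw [hν₁, withDensity_map_eq_map_withDensity_comp hgraph hL, ← withDensity_mul _ (by fun_prop)
      (hL.comp hgraph), hμ_graph, hρX]
    refine congrArg (Measure.map _) (withDensity_congr_ae ?_)
    filter_upwards [hρY_pos] with x hx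
    exact ENNReal.ofReal_mul_mul_mul_ofReal_one_div_mul_cancel
      (Real.sqrt_pos.2 (by positivity)) hx
  exact ⟨hdensity ▸ withDensity_absolutelyContinuous _ _,
    fun A hA => by rw [← withDensity_apply _ hA, hdensity]⟩

/-- Let `X` have law `μ_X ≪ L₁` with density `ρ_X`, let `φ ∈ C¹(ℝ)`
and `Y = φ(X)`, with `Y` having density `ρ_Y`. Let `γ = {(x, φ(x))}` and
`ν₁(A) = ∫_{γ∩A} ρ_X(x)ρ_Y(y) dσ(x,y)` (line integral w.r.t. arclength, i.e. the
image under `x ↦ (x, φ(x))` of the measure with density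
`ρ_X(x)ρ_Y(φ(x))√(1+φ'(x)²)`). Then `μ ≪ ν₁` and
`L(x,y) = 1/(ρ_Y(y)√(1+φ'(x)²))` is a version of `dμ/dν₁`:
`∫_A L dν₁ = μ(A)` for all Borel `A`. -/
theorem stmt_10
    {Ω : Type*} [MeasurableSpace Ω] (ℙ : Measure Ω) [IsProbabilityMeasure ℙ]
    (X : Ω → ℝ) (hX : Measurable X)
    (φ : ℝ → ℝ) (hφ : ContDiff ℝ 1 φ)
    (ρX ρY : ℝ → ℝ) (hρXm : Measurable ρX) (hρYm : Measurable ρY)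
    (hρX0 : ∀ x, 0 ≤ ρX x) (hρY0 : ∀ y, 0 ≤ ρY y)
    (hρX : ℙ.map X = volume.withDensity (fun x => ENNReal.ofReal (ρX x)))
    (hρY : ℙ.map (fun ω => φ (X ω)) = volume.withDensity (fun y => ENNReal.ofReal (ρY y)))
    (μ : Measure (ℝ × ℝ))
    (hμ : μ = ℙ.map (fun ω => (X ω, φ (X ω))))
    (ν₁ : Measure (ℝ × ℝ))
    (hν₁ : ν₁ = (volume.withDensity
        (fun x => ENNReal.ofReal (ρX x * ρY (φ x) * Real.sqrt (1 + deriv φ x ^ 2)))).map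
        (fun x => (x, φ x))) :
    μ ≪ ν₁ ∧
      ∀ A : Set (ℝ × ℝ), MeasurableSet A →
        ∫⁻ p in A,
            ENNReal.ofReal (1 / (ρY p.2 * Real.sqrt (1 + deriv φ p.1 ^ 2))) ∂ν₁
          = μ A :=
  stmt_10_general ℙ X hX φ hφ ρX ρY hρXm hρYm hρX hρY μ hμ ν₁ hν₁
end

section
/- Let X ~ N(0,1) and Y = X almost surely, and define the generalized lift function L(x,x) = 2/(π ρ_X(x) √2) (from the general definition with φ(x) = x, so φ' = 1 and ρ_Y = ρ_X). Then the generalized mutual information I(X,Y) = E[log L(X,X)] equals log(√2/π) + log(√(2πe)) = log(2√e/√π); in particular it is finite, and strictly less than I(X_n, Y_n) = −(1/2)log(1−r_n²) for all n large enough when r_n → 1. -/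
/-!
Since `L(x,x) = (√2/π) / ρ_X(x)`, the integral is `log (√2/π)` plus the differential entropy
`E[-log ρ_X(X)]` of the standard normal. As `-log ρ_X(x) = log √(2π) + x²/2` and `E[X²] = 1`,
that entropy is `log √(2π) + 1/2 = log √(2πe)`. The comparison with `-(1/2) log (1 - r_n²)` holds
eventually because the latter tends to `+∞` as `r_n → 1`.
-/

open MeasureTheory Filter Topology Real ProbabilityTheory
open scoped NNReal

lemma neg_log_gaussianPDFReal (μ : ℝ) {v : ℝ≥0} (hv : v ≠ 0) (x : ℝ) :
    -log (gaussianPDFReal μ v x) = log √(2 * π * v) + (x - μ) ^ 2 / (2 * v) := by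
  have : 0 < √(2 * π * v) := by positivity
  rw [gaussianPDFReal, log_mul (inv_ne_zero this.ne') (exp_ne_zero _), log_inv, log_exp]
  ring

lemma integral_sq_sub_gaussianReal (μ : ℝ) (v : ℝ≥0) :
    ∫ x, (x - μ) ^ 2 ∂gaussianReal μ v = v := by
  simpa [variance_eq_integral measurable_id'.aemeasurable] using
    variance_fun_id_gaussianReal (μ := μ) (v := v)

lemma integrable_sq_sub_gaussianReal (μ : ℝ) (v : ℝ≥0) :
    Integrable (fun x ↦ (x - μ) ^ 2) (gaussianReal μ v) :=
  ((memLp_id_gaussianReal 2).sub (memLp_const μ)).integrable_sq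

lemma integrable_neg_log_gaussianPDFReal (μ : ℝ) {v : ℝ≥0} (hv : v ≠ 0) :
    Integrable (fun x ↦ -log (gaussianPDFReal μ v x)) (gaussianReal μ v) := by
  simp_rw [neg_log_gaussianPDFReal μ hv]
  exact (integrable_const _).add ((integrable_sq_sub_gaussianReal μ v).div_const _)

lemma integral_neg_log_gaussianPDFReal (μ : ℝ) {v : ℝ≥0} (hv : v ≠ 0) :
    ∫ x, -log (gaussianPDFReal μ v x) ∂gaussianReal μ v = log √(2 * π * rexp 1 * v) := by
  simp_rw [neg_log_gaussianPDFReal μ hv]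
  rw [integral_add (integrable_const _) ((integrable_sq_sub_gaussianReal μ v).div_const _),
    integral_const, integral_div, integral_sq_sub_gaussianReal, probReal_univ, one_smul,
    log_sqrt (by positivity), log_sqrt (by positivity), mul_right_comm _ (rexp 1),
    log_mul (by positivity) (exp_ne_zero 1), log_exp]
  field_simp

lemma tendsto_neg_half_log_one_sub_sq_atTop {α : Type*} {l : Filter α} {r : α → ℝ}
    (hr : ∀ a, |r a| < 1) (hlim : Tendsto r l (𝓝 1)) :
    Tendsto (fun a ↦ -(1 / 2) * log (1 - r a ^ 2)) l atTop := by
  have hpos : ∀ a, 0 < 1 - r a ^ 2 := fun a ↦ by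
    nlinarith [sq_abs (r a), abs_nonneg (r a), hr a]
  have h1 : Tendsto (fun a ↦ 1 - r a ^ 2) l (𝓝 (1 - 1 ^ 2)) :=
    tendsto_const_nhds.sub (hlim.pow 2)
  rw [one_pow, sub_self] at h1
  have h0 : Tendsto (fun a ↦ 1 - r a ^ 2) l (𝓝[>] 0) :=
    tendsto_nhdsWithin_of_tendsto_nhds_of_eventually_within _ h1 (.of_forall hpos)
  refine ((tendsto_neg_atBot_atTop.comp (tendsto_log_nhdsGT_zero.comp h0)).const_mul_atTop
    one_half_pos).congr fun a ↦ ?_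
  simp only [Function.comp_apply]
  ring

/-- For `X ~ N(0,1)` and `Y = X` a.s., the generalized lift function
on the diagonal is `L(x,x) = 2/(π ρ_X(x) √2)`, and the generalized mutual
information `I(X,Y) = ∫ log L(x,x) ρ_X(x) dx` equals
`log(√2/π) + log(√(2πe)) = log(2√e/√π)`; in particular it is finite, and
strictly less than `I(X_n,Y_n) = −(1/2)log(1−r_n²)` for all `n` large enough
whenever `r_n → 1` with `|r_n| < 1`. -/
theorem stmt_14
    (ρX : ℝ → ℝ) (hρX : ∀ x, ρX x = (Real.sqrt (2 * π))⁻¹ * Real.exp (-x ^ 2 / 2))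
    (L : ℝ → ℝ) (hL : ∀ x, L x = 2 / (π * ρX x * Real.sqrt 2)) :
    ((∫ x : ℝ, Real.log (L x) * ρX x)
        = Real.log (Real.sqrt 2 / π) + Real.log (Real.sqrt (2 * π * Real.exp 1))) ∧
    ((∫ x : ℝ, Real.log (L x) * ρX x)
        = Real.log (2 * Real.sqrt (Real.exp 1) / Real.sqrt π)) ∧
    (∀ r : ℕ → ℝ, (∀ n, |r n| < 1) → Tendsto r atTop (𝓝 1) →
      ∀ᶠ n in atTop,
        (∫ x : ℝ, Real.log (L x) * ρX x) < -(1 / 2) * Real.log (1 - r n ^ 2)) := by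
  have hρ : ρX = gaussianPDFReal 0 1 := funext fun x ↦ by simp [hρX, gaussianPDFReal]
  have hlogL : ∀ x, log (L x) = log (√2 / π) + -log (ρX x) := fun x ↦ by
    have hρx : 0 < ρX x := hρ ▸ gaussianPDFReal_pos 0 1 x one_ne_zero
    rw [hL, ← sub_eq_add_neg, ← log_div (by positivity) hρx.ne']
    congr 1
    field_simp
    rw [sq_sqrt zero_le_two]
  have hI : ∫ x, log (L x) * ρX x = log (√2 / π) + log √(2 * π * rexp 1) := by
    calc ∫ x, log (L x) * ρX x = ∫ x, log (L x) ∂gaussianReal 0 1 := by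
          simp_rw [integral_gaussianReal_eq_integral_smul one_ne_zero, ← hρ, smul_eq_mul, mul_comm]
      _ = ∫ x, log (√2 / π) + -log (gaussianPDFReal 0 1 x) ∂gaussianReal 0 1 := by
          simp_rw [hlogL, hρ]
      _ = _ := by
          rw [integral_add (integrable_const _) (integrable_neg_log_gaussianPDFReal 0 one_ne_zero),
            integral_neg_log_gaussianPDFReal 0 one_ne_zero, integral_const, probReal_univ,
            one_smul, NNReal.coe_one, mul_one]
  have hsimp : √2 / π * √(2 * π * rexp 1) = 2 * √(rexp 1) / √π := by
    rw [sqrt_mul (by positivity), sqrt_mul zero_le_two]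
    field_simp
    rw [sq_sqrt zero_le_two, sq_sqrt pi_pos.le, mul_comm]
  refine ⟨hI, ?_, fun r hr hlim ↦ ?_⟩
  · rw [hI, ← log_mul (by positivity) (by positivity), hsimp]
  · exact (tendsto_neg_half_log_one_sub_sq_atTop hr hlim).eventually_gt_atTop _
end
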